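/- Let n ≥ 2 and let φ be a finite-order automorphism of the one-sided shift on (Fin n)^ℕ. Then there exists a support (A₀, Φ₀) of φ such that every support (A, Φ) of φ folds onto A₀: there is a surjection θ : Q_A → Q_{A₀} with θ (π_A x q) = π_{A₀} x (θ q) for all x ∈ Fin n and q ∈ Q_A. In particular, up to isomorphism of automata, A₀ is the unique minimal synchronizing automaton supporting φ. -/

import Mathlib

/-- The one-sided shift map on `(Fin n)^ℕ`: `(σ x) i = x (i+1)`. -/
def shiftMap (n : ℕ) : (ℕ → Fin n) → (ℕ → Fin n) := fun x i => x (i + 1)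

/-- `b` has orbit length exactly `N` under `f`: `N` is the least `L ≥ 1` with `f^[L] b = b`. -/
def HasOrbitLen {β : Type*} (f : β → β) (b : β) (N : ℕ) : Prop :=
  IsLeast {L : ℕ | 0 < L ∧ f^[L] b = b} N

/-- An automorphism of the one-sided shift: a homeomorphism commuting with the shift. -/
def IsShiftAut (n : ℕ) (φ : (ℕ → Fin n) ≃ₜ (ℕ → Fin n)) : Prop :=
  ⇑φ ∘ shiftMap n = shiftMap n ∘ ⇑φ

/-- `φ` has finite order. -/
def FiniteOrderAut (n : ℕ) (φ : (ℕ → Fin n) ≃ₜ (ℕ → Fin n)) : Prop :=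
  ∃ m : ℕ, 0 < m ∧ (⇑φ)^[m] = id

/-- Extension of the transition function of an automaton to words (letters read in order). -/
def transStar {n : ℕ} {Q : Type*} (π : Fin n → Q → Q) : List (Fin n) → Q → Q
  | [], q => q
  | x :: w, q => transStar π w (π x q)

/-- The automaton `(Q, π)` is synchronizing at level `k` with synchronizing map `s`. -/
def SyncAtLevelWith {n : ℕ} {Q : Type*} (π : Fin n → Q → Q) (k : ℕ)
    (s : List (Fin n) → Q) : Prop :=
  ∀ w : List (Fin n), w.length = k → ∀ q : Q, transStar π w q = s w

/-- The synchronizing map `s` at level `k` is surjective (the automaton is core). -/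
def CoreAt {n : ℕ} {Q : Type*} (s : List (Fin n) → Q) (k : ℕ) : Prop :=
  ∀ q : Q, ∃ w : List (Fin n), w.length = k ∧ s w = q

/-- An automorphism of the underlying digraph of the automaton `(Q, π)`. -/
structure DigraphAut {Q : Type*} (n : ℕ) (π : Fin n → Q → Q) where
  α : Q ≃ Q
  lab : Q → Equiv.Perm (Fin n)
  compat : ∀ (x : Fin n) (q : Q), π (lab q x) (α q) = α (π x q)

/-- Action of a digraph automorphism on the edge set `Q × Fin n`. -/
def edgeMap {Q : Type*} {n : ℕ} {π : Fin n → Q → Q} (Φ : DigraphAut n π) :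
    Q × Fin n → Q × Fin n :=
  fun e => (Φ.α e.1, Φ.lab e.1 e.2)

/-- The output word map `Λ` of a digraph automorphism. -/
def outWord {Q : Type*} {n : ℕ} (π : Fin n → Q → Q) (lab : Q → Equiv.Perm (Fin n)) :
    List (Fin n) → Q → List (Fin n)
  | [], _ => []
  | x :: w, q => lab q x :: outWord π lab w (π x q)

/-- Action of a digraph automorphism on based circuits: `(q, w) ↦ (α q, Λ(w, q))`. -/
def circMap {Q : Type*} {n : ℕ} {π : Fin n → Q → Q} (Φ : DigraphAut n π) :
    Q × List (Fin n) → Q × List (Fin n) :=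
  fun c => (Φ.α c.1, outWord π Φ.lab c.2 c.1)

/-- `(q, w)` is a based circuit: `w` nonempty and `π*(w, q) = q`. -/
def IsBasedCircuit {Q : Type*} {n : ℕ} (π : Fin n → Q → Q) (c : Q × List (Fin n)) : Prop :=
  c.2 ≠ [] ∧ transStar π c.2 c.1 = c.1

/-- The sliding block code induced by an automaton synchronizing at level `k`
with synchronizing map `s` and digraph automorphism with labelling `lab`:
`(F x) i = lab q_i (x i)` where `q_i = s [x(i+k), x(i+k-1), …, x(i+1)]`. -/
def inducedMap {Q : Type*} {n : ℕ} (k : ℕ) (s : List (Fin n) → Q)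
    (lab : Q → Equiv.Perm (Fin n)) : (ℕ → Fin n) → (ℕ → Fin n) :=
  fun x i => lab (s (List.ofFn fun j : Fin k => x (i + k - (j : ℕ)))) (x i)

/-- `(A, Φ)` (with `A` synchronizing and core) is a support of the shift automorphism `φ`. -/
def IsSupport {Q : Type*} (n : ℕ) (π : Fin n → Q → Q) (Φ : DigraphAut n π)
    (φ : (ℕ → Fin n) ≃ₜ (ℕ → Fin n)) : Prop :=
  ∃ (k : ℕ) (s : List (Fin n) → Q), SyncAtLevelWith π k s ∧ CoreAt s k ∧
    inducedMap k s Φ.lab = ⇑φ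

/-- The permutation automorphism of the shift induced by a permutation of `Fin n`. -/
def permAutMap {n : ℕ} (ρ : Equiv.Perm (Fin n)) : (ℕ → Fin n) → (ℕ → Fin n) :=
  fun x i => ρ (x i)

/-- `t` is heavy for `(A, Φ, N)` with divisibility constant `b`. -/
def Heavy {Q : Type*} {n : ℕ} (π : Fin n → Q → Q) (Φ : DigraphAut n π)
    (N b : ℕ) (t : Q) : Prop :=
  b ∣ N ∧ b ≠ N ∧ (∀ r : ℕ, HasOrbitLen (⇑Φ.α) t r → r ∣ b) ∧
  ∀ (q : Q) (x : Fin n), π x q = t →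
    ∀ L : ℕ, HasOrbitLen (edgeMap Φ) (q, x) L → Nat.lcm L b = N

namespace UMS

variable {n : ℕ}

/-- The state space: functions from (word below, power) to permutations. -/
abbrev St (n : ℕ) := List (Fin n) → ℕ → Equiv.Perm (Fin n)

/-- Feed one letter below the base point. -/
def prep (x : Fin n) (f : St n) : St n := fun u j => f (x :: u) j

/-- Decode the input letters from the output letters using the state. -/
def decode (f : St n) : List (Fin n) → List (Fin n)
  | [] => []
  | y :: u => ((f [] 1)⁻¹ y) :: decode (prep ((f [] 1)⁻¹ y) f) u

/-- The abstract digraph automorphism on states. -/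
def Amap (f : St n) : St n :=
  fun u j => f (decode f u) (j + 1) * (f (decode f u) 1)⁻¹

lemma Amap_prep (x : Fin n) (f : St n) :
    Amap (prep x f) = prep (f [] 1 x) (Amap f) := by
  funext u j
  have hd : decode f ((f [] 1 x) :: u) = x :: decode (prep x f) u := by
    simp [decode]
  simp only [Amap, prep, hd]

lemma Amap_cons (f : St n) (y : Fin n) (u : List (Fin n)) (j : ℕ) :
    Amap f (y :: u) j = Amap (prep ((f [] 1)⁻¹ y) f) u j := by
  simp only [Amap, decode, prep]

/-- Truncated prepend of a list to a window. -/
def wext (k : ℕ) (l : List (Fin n)) (v : Fin k → Fin n) : Fin k → Fin n :=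
  fun t => if h : (t : ℕ) < l.length then l[(t : ℕ)]
    else v ⟨(t : ℕ) - l.length, lt_of_le_of_lt (Nat.sub_le _ _) t.isLt⟩

lemma wext_nil (k : ℕ) (v : Fin k → Fin n) : wext k [] v = v := by
  funext t; simp [wext]

lemma wext_append (k : ℕ) (l₁ l₂ : List (Fin n)) (v : Fin k → Fin n) :
    wext k (l₁ ++ l₂) v = wext k l₁ (wext k l₂ v) := by
  funext t
  simp only [wext, List.length_append]
  by_cases h1 : (t : ℕ) < l₁.length
  · rw [dif_pos (by omega), dif_pos h1, List.getElem_append, dif_pos h1]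
  · rw [dif_neg h1]
    by_cases h2 : (t : ℕ) < l₁.length + l₂.length
    · rw [dif_pos h2, List.getElem_append, dif_neg (by omega), dif_pos (by omega)]
    · rw [dif_neg h2, dif_neg (by omega)]
      exact congrArg v (Fin.ext (by simp only []; omega))

lemma wext_long (k : ℕ) (l : List (Fin n)) (hl : k ≤ l.length) (v v' : Fin k → Fin n) :
    wext k l v = wext k l v' := by
  funext t
  rw [wext, wext, dif_pos (lt_of_lt_of_le t.isLt hl), dif_pos (lt_of_lt_of_le t.isLt hl)]

lemma wext_ofFn (k : ℕ) (v v' : Fin k → Fin n) : wext k (List.ofFn v) v' = v := by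
  funext t
  rw [wext, dif_pos (by simp [t.isLt])]
  simp

end UMS
namespace UMS
variable {n : ℕ}

/-- The germ state attached to a window `v`, given local rules `P` for all powers. -/
def Fgerm (k : ℕ) (P : ℕ → (Fin k → Fin n) → Equiv.Perm (Fin n)) (v : Fin k → Fin n) : St n :=
  fun u j => P j (wext k u.reverse v)

lemma Fgerm_prep (k : ℕ) (P : ℕ → (Fin k → Fin n) → Equiv.Perm (Fin n)) (x : Fin n)
    (v : Fin k → Fin n) : prep x (Fgerm k P v) = Fgerm k P (wext k [x] v) := by
  funext u j
  simp only [prep, Fgerm, List.reverse_cons, wext_append]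

/-- The window of `x` strictly above position `i`. -/
def winAt (k : ℕ) (x : ℕ → Fin n) (i : ℕ) : Fin k → Fin n := fun t => x (i + 1 + t)

/-- A default sequence whose window above 0 is `v`. -/
def padw (k : ℕ) (d : Fin n) (v : Fin k → Fin n) : ℕ → Fin n :=
  fun t => if h : 1 ≤ t ∧ t - 1 < k then v ⟨t - 1, h.2⟩ else d

lemma winAt_padw (k : ℕ) (d : Fin n) (v : Fin k → Fin n) : winAt k (padw k d v) 0 = v := by
  funext t
  have ht : (t : ℕ) < k := t.isLt
  simp only [winAt, padw]
  rw [dif_pos (by omega : 1 ≤ 0 + 1 + (t : ℕ) ∧ 0 + 1 + (t : ℕ) - 1 < k)]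
  exact congrArg v (Fin.ext (by simp only []; omega))

lemma transStar_append {Q : Type*} (π : Fin n → Q → Q) (w₁ w₂ : List (Fin n)) (q : Q) :
    transStar π (w₁ ++ w₂) q = transStar π w₂ (transStar π w₁ q) := by
  induction w₁ generalizing q with
  | nil => rfl
  | cons a w ih => show transStar π (w ++ w₂) (π a q) = _; rw [ih]; rfl

lemma transStar_outWord {Q : Type*} (π : Fin n → Q → Q) (Φ : DigraphAut n π)
    (w : List (Fin n)) (q : Q) :
    transStar π (outWord π Φ.lab w q) (Φ.α q) = Φ.α (transStar π w q) := by
  induction w generalizing q with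
  | nil => rfl
  | cons x w ih =>
      show transStar π (outWord π Φ.lab w (π x q)) (π (Φ.lab q x) (Φ.α q)) = _
      rw [Φ.compat, ih]
      rfl

lemma outWord_length {Q : Type*} (π : Fin n → Q → Q) (lab : Q → Equiv.Perm (Fin n))
    (w : List (Fin n)) (q : Q) : (outWord π lab w q).length = w.length := by
  induction w generalizing q with
  | nil => rfl
  | cons x w ih => simp [outWord, ih]

/-- Label of the `j`-th power automorphism at a state. -/
def Labpow {Q : Type*} {π : Fin n → Q → Q} (Φ : DigraphAut n π) : ℕ → Q → Equiv.Perm (Fin n)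
  | 0, _ => 1
  | j + 1, q => Labpow Φ j (Φ.α q) * Φ.lab q

/-- The state determined by the `k'`-window of `x` above `i`. -/
def stQ {Q : Type*} (k' : ℕ) (s : List (Fin n) → Q) (x : ℕ → Fin n) (i : ℕ) : Q :=
  s (List.ofFn fun t : Fin k' => x (i + k' - (t : ℕ)))

end UMS
namespace UMS
variable {n : ℕ}

lemma step_stQ {Q : Type*} (π : Fin n → Q → Q) (k' : ℕ) (s : List (Fin n) → Q)
    (hsync : SyncAtLevelWith π k' s) (x : ℕ → Fin n) (i : ℕ) :
    π (x (i + 1)) (stQ k' s x (i + 1)) = stQ k' s x i := by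
  have ha : (List.ofFn fun t : Fin (k' + 1) => x (i + 1 + k' - (t : ℕ)))
      = (List.ofFn fun t : Fin k' => x (i + 1 + k' - (t : ℕ))) ++ [x (i + 1)] := by
    apply List.ext_getElem (by simp)
    intro r h1 h2
    have hr : r < k' + 1 := by simpa using h1
    simp only [List.getElem_ofFn, List.getElem_append, List.length_ofFn,
      List.getElem_singleton]
    split
    · first | (congr 1 <;> omega) | rfl
    · first | (congr 1 <;> omega) | rfl
  have hb : (List.ofFn fun t : Fin (k' + 1) => x (i + 1 + k' - (t : ℕ)))
      = x (i + 1 + k') :: List.ofFn fun t : Fin k' => x (i + k' - (t : ℕ)) := by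
    apply List.ext_getElem (by simp)
    intro r h1 h2
    have hr : r < k' + 1 := by simpa using h1
    rcases r with _ | r
    · simp only [List.getElem_ofFn, List.getElem_cons_zero]
      first | (congr 1 <;> omega) | rfl
    · simp only [List.getElem_ofFn, List.getElem_cons_succ]
      first | (congr 1 <;> omega) | rfl
  have h1 : transStar π (List.ofFn fun t : Fin (k' + 1) => x (i + 1 + k' - (t : ℕ)))
        (stQ k' s x i)
      = π (x (i + 1)) (stQ k' s x (i + 1)) := by
    rw [ha, transStar_append,
      hsync (List.ofFn fun t : Fin k' => x (i + 1 + k' - (t : ℕ))) (by simp) (stQ k' s x i)]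
    rfl
  have h2 : transStar π (List.ofFn fun t : Fin (k' + 1) => x (i + 1 + k' - (t : ℕ)))
        (stQ k' s x i) = stQ k' s x i := by
    rw [hb]
    show transStar π _ (π (x (i + 1 + k')) (stQ k' s x i)) = _
    rw [hsync (List.ofFn fun t : Fin k' => x (i + k' - (t : ℕ))) (by simp) _]
    rfl
  rw [← h1]
  exact h2

lemma outWord_window {Q : Type*} (π : Fin n → Q → Q) (Φ : DigraphAut n π) (k' : ℕ)
    (s : List (Fin n) → Q) (hsync : SyncAtLevelWith π k' s)
    (g : (ℕ → Fin n) → (ℕ → Fin n))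
    (hind : ∀ x i, g x i = Φ.lab (stQ k' s x i) (x i))
    (l : ℕ) (x : ℕ → Fin n) (p : ℕ) :
    outWord π Φ.lab (List.ofFn fun t : Fin l => x (p + l - (t : ℕ))) (stQ k' s x (p + l))
      = List.ofFn fun t : Fin l => g x (p + l - (t : ℕ)) := by
  induction l with
  | zero => rfl
  | succ l ih =>
      have hin : (List.ofFn fun t : Fin (l + 1) => x (p + (l + 1) - (t : ℕ)))
          = x (p + l + 1) :: List.ofFn fun t : Fin l => x (p + l - (t : ℕ)) := by
        apply List.ext_getElem (by simp)
        intro r h1 h2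
        have hr : r < l + 1 := by simpa using h1
        rcases r with _ | r
        · simp only [List.getElem_ofFn, List.getElem_cons_zero]
          first | (congr 1 <;> omega) | rfl
        · simp only [List.getElem_ofFn, List.getElem_cons_succ]
          first | (congr 1 <;> omega) | rfl
      have hout : (List.ofFn fun t : Fin (l + 1) => g x (p + (l + 1) - (t : ℕ)))
          = g x (p + l + 1) :: List.ofFn fun t : Fin l => g x (p + l - (t : ℕ)) := by
        apply List.ext_getElem (by simp)
        intro r h1 h2
        have hr : r < l + 1 := by simpa using h1
        rcases r with _ | r
        · simp only [List.getElem_ofFn, List.getElem_cons_zero]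
          first | (congr 1 <;> omega) | rfl
        · simp only [List.getElem_ofFn, List.getElem_cons_succ]
          first | (congr 1 <;> omega) | rfl
      have hp1 : p + (l + 1) = (p + l) + 1 := by omega
      rw [hin, hout, hp1]
      show Φ.lab (stQ k' s x (p + l + 1)) (x (p + l + 1))
            :: outWord π Φ.lab _ (π (x (p + l + 1)) (stQ k' s x (p + l + 1))) = _
      rw [step_stQ π k' s hsync x (p + l), ih, ← hind]

lemma alpha_stQ {Q : Type*} (π : Fin n → Q → Q) (Φ : DigraphAut n π) (k' : ℕ)
    (s : List (Fin n) → Q) (hsync : SyncAtLevelWith π k' s)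
    (g : (ℕ → Fin n) → (ℕ → Fin n))
    (hind : ∀ x i, g x i = Φ.lab (stQ k' s x i) (x i))
    (x : ℕ → Fin n) (p : ℕ) :
    stQ k' s (g x) p = Φ.α (stQ k' s x p) := by
  have h1 := outWord_window π Φ k' s hsync g hind k' x p
  show s (List.ofFn fun t : Fin k' => g x (p + k' - (t : ℕ))) = _
  rw [← h1, ← hsync _ (by rw [outWord_length]; simp) (Φ.α (stQ k' s x (p + k'))),
    transStar_outWord, hsync _ (by simp) (stQ k' s x (p + k'))]
  rfl

lemma iter_eq_Lab {Q : Type*} (π : Fin n → Q → Q) (Φ : DigraphAut n π) (k' : ℕ)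
    (s : List (Fin n) → Q) (hsync : SyncAtLevelWith π k' s)
    (g : (ℕ → Fin n) → (ℕ → Fin n))
    (hind : ∀ x i, g x i = Φ.lab (stQ k' s x i) (x i))
    (j : ℕ) (x : ℕ → Fin n) (p : ℕ) :
    g^[j] x p = Labpow Φ j (stQ k' s x p) (x p) := by
  induction j generalizing x with
  | zero => rfl
  | succ j ih =>
      rw [Function.iterate_succ_apply, ih (g x),
        alpha_stQ π Φ k' s hsync g hind x p, hind x p]
      rfl

lemma P_eq_Lab {Q : Type*} (π : Fin n → Q → Q) (Φ : DigraphAut n π) (k' : ℕ)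
    (s : List (Fin n) → Q) (hsync : SyncAtLevelWith π k' s)
    (g : (ℕ → Fin n) → (ℕ → Fin n))
    (hind : ∀ x i, g x i = Φ.lab (stQ k' s x i) (x i))
    (k : ℕ) (P : ℕ → (Fin k → Fin n) → Equiv.Perm (Fin n))
    (hP : ∀ j x i, g^[j] x i = P j (winAt k x i) (x i))
    (j : ℕ) (x : ℕ → Fin n) (p : ℕ) :
    P j (winAt k x p) = Labpow Φ j (stQ k' s x p) := by
  apply Equiv.ext
  intro a
  set x' := Function.update x p a with hx'
  have h1 : winAt k x' p = winAt k x p := by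
    funext t; simp only [winAt, hx']
    rw [Function.update_of_ne (by omega)]
  have h2 : stQ k' s x' p = stQ k' s x p := by
    unfold stQ; congr 1
    congr 1; funext t
    have := t.isLt
    rw [hx', Function.update_of_ne (by omega)]
  have h3 : x' p = a := Function.update_self _ _ _
  calc P j (winAt k x p) a = P j (winAt k x' p) (x' p) := by rw [h1, h3]
    _ = g^[j] x' p := (hP j x' p).symm
    _ = Labpow Φ j (stQ k' s x' p) (x' p) := iter_eq_Lab π Φ k' s hsync g hind j x' p
    _ = Labpow Φ j (stQ k' s x p) a := by rw [h2, h3]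

end UMS
namespace UMS
variable {n : ℕ}

lemma main_fold {Q : Type*} (π : Fin n → Q → Q) (Φ : DigraphAut n π) (k' : ℕ)
    (s : List (Fin n) → Q) (hsync : SyncAtLevelWith π k' s)
    (g : (ℕ → Fin n) → (ℕ → Fin n))
    (hind : ∀ x i, g x i = Φ.lab (stQ k' s x i) (x i))
    (k : ℕ) (P : ℕ → (Fin k → Fin n) → Equiv.Perm (Fin n))
    (hP : ∀ j x i, g^[j] x i = P j (winAt k x i) (x i)) :
    ∀ (u : List (Fin n)) (x : ℕ → Fin n) (i j : ℕ),
      Labpow Φ j (transStar π u (stQ k' s x i)) = P j (wext k u.reverse (winAt k x i)) := by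
  intro u
  induction u with
  | nil =>
      intro x i j
      rw [List.reverse_nil, wext_nil]
      exact (P_eq_Lab π Φ k' s hsync g hind k P hP j x i).symm
  | cons y u ih =>
      intro x i j
      set x1 : ℕ → Fin n := fun t => x (t - 1) with hx1
      have e1 : stQ k' s x i = stQ k' s x1 (i + 1) := by
        unfold stQ; congr 1
        congr 1
        funext t
        have ht := t.isLt
        simp only [hx1]
        congr 1; omega
      have e2 : winAt k x i = winAt k x1 (i + 1) := by
        funext t
        simp only [winAt, hx1]
        congr 1; omega
      rw [e1, e2]
      set x2 := Function.update x1 (i + 1) y with hx2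
      have e3 : stQ k' s x1 (i + 1) = stQ k' s x2 (i + 1) := by
        unfold stQ; congr 1
        congr 1
        funext t
        have ht := t.isLt
        rw [hx2, Function.update_of_ne (show i + 1 + k' - (t : ℕ) ≠ i + 1 by omega)]
      have hy : y = x2 (i + 1) := by
        simp [hx2]
      have e5 : winAt k x2 i = wext k [y] (winAt k x1 (i + 1)) := by
        funext t
        simp only [winAt, wext, List.length_singleton]
        by_cases h : (t : ℕ) < 1
        · rw [dif_pos h]
          simp only [List.getElem_singleton]
          rw [show i + 1 + (t : ℕ) = i + 1 by omega, hx2, Function.update_self]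
        · rw [dif_neg h]
          rw [hx2, Function.update_of_ne (show i + 1 + (t : ℕ) ≠ i + 1 by omega)]
          show x1 (i + 1 + (t : ℕ)) = x1 (i + 1 + 1 + ((t : ℕ) - 1))
          congr 1; omega
      rw [e3, List.reverse_cons, wext_append, ← e5]
      have harg : transStar π (y :: u) (stQ k' s x2 (i + 1))
          = transStar π u (stQ k' s x2 i) := by
        show transStar π u (π y (stQ k' s x2 (i + 1))) = _
        rw [hy, step_stQ π k' s hsync x2 i]
      rw [harg, ih x2 i j]

end UMS

/-- The minimal state space: germs of the local rules of all powers. -/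
def Q0 (n k : ℕ) (P : ℕ → (Fin k → Fin n) → Equiv.Perm (Fin n)) : Type :=
  {f : UMS.St n // f ∈ Set.range (UMS.Fgerm k P)}

/-- Transition map of the minimal automaton. -/
def pi0 {n : ℕ} (k : ℕ) (P : ℕ → (Fin k → Fin n) → Equiv.Perm (Fin n)) :
    Fin n → Q0 n k P → Q0 n k P :=
  fun x q => ⟨UMS.prep x q.1, by
    obtain ⟨v, hv⟩ := q.2
    exact ⟨UMS.wext k [x] v, by rw [← hv, UMS.Fgerm_prep]⟩⟩

namespace UMS

lemma folding {Q : Type*} (π : Fin n → Q → Q) (Φ : DigraphAut n π) (k' : ℕ)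
    (s : List (Fin n) → Q) (hsync : SyncAtLevelWith π k' s) (hcore : CoreAt s k')
    (g : (ℕ → Fin n) → (ℕ → Fin n))
    (hind : ∀ x i, g x i = Φ.lab (stQ k' s x i) (x i))
    (k : ℕ) (P : ℕ → (Fin k → Fin n) → Equiv.Perm (Fin n))
    (hP : ∀ j x i, g^[j] x i = P j (winAt k x i) (x i)) (d : Fin n) :
    ∃ θ : Q → Q0 n k P, Function.Surjective θ ∧
      ∀ (x : Fin n) (q : Q), θ (π x q) = pi0 k P x (θ q) := by
  have key : ∀ (x : ℕ → Fin n) (i : ℕ),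
      (fun u j => Labpow Φ j (transStar π u (stQ k' s x i))) = Fgerm k P (winAt k x i) := by
    intro x i
    funext u j
    exact main_fold π Φ k' s hsync g hind k P hP u x i j
  have mem : ∀ q : Q, (fun u j => Labpow Φ j (transStar π u q)) ∈ Set.range (Fgerm k P) := by
    intro q
    obtain ⟨w, hw, hsw⟩ := hcore q
    set x : ℕ → Fin n := fun r => w.getD (k' - r) d with hx
    have hq : stQ k' s x 0 = q := by
      rw [← hsw]; unfold stQ; congr 1
      apply List.ext_getElem (by simp [hw])
      intro r h1 h2
      have hr : r < k' := by simpa using h1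
      simp only [List.getElem_ofFn, hx]
      rw [show 0 + k' - (r : ℕ) = k' - r by omega]
      rw [List.getD_eq_getElem w d (by omega : k' - (k' - r) < w.length)]
      congr 1
      omega
    refine ⟨winAt k x 0, ?_⟩
    rw [← key x 0, hq]
  refine ⟨fun q => ⟨_, mem q⟩, ?_, ?_⟩
  · rintro ⟨f, v, hv⟩
    refine ⟨stQ k' s (padw k d v) 0, ?_⟩
    apply Subtype.ext
    show (fun u j => Labpow Φ j (transStar π u (stQ k' s (padw k d v) 0))) = f
    rw [key, winAt_padw, hv]
  · intro x q
    apply Subtype.ext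
    rfl

end UMS
namespace UMS
variable {n : ℕ}

lemma Amap_Fgerm (g : (ℕ → Fin n) → (ℕ → Fin n))
    (hg : g ∘ shiftMap n = shiftMap n ∘ g)
    (k : ℕ) (P : ℕ → (Fin k → Fin n) → Equiv.Perm (Fin n))
    (hP : ∀ j x i, g^[j] x i = P j (winAt k x i) (x i)) :
    ∀ (u : List (Fin n)) (x : ℕ → Fin n) (i j : ℕ),
      Amap (Fgerm k P (winAt k x i)) u j = Fgerm k P (winAt k (g x) i) u j := by
  have hg1 : ∀ (z : ℕ → Fin n) (q : ℕ), g z q = P 1 (winAt k z q) (z q) := by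
    intro z q
    have := hP 1 z q
    rwa [Function.iterate_one] at this
  intro u
  induction u with
  | nil =>
      intro x i j
      have hF0 : ∀ (v : Fin k → Fin n) (j' : ℕ), Fgerm k P v [] j' = P j' v := by
        intro v j'
        simp only [Fgerm, List.reverse_nil, wext_nil]
      show Fgerm k P (winAt k x i) [] (j + 1) * (Fgerm k P (winAt k x i) [] 1)⁻¹
          = Fgerm k P (winAt k (g x) i) [] j
      rw [hF0, hF0, hF0]
      apply Equiv.ext
      intro a
      set a' := (P 1 (winAt k x i))⁻¹ a with ha'
      set x' := Function.update x i a' with hx'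
      have hwho : ∀ q : ℕ, q ≠ i → x' q = x q := by
        intro q hq; rw [hx', Function.update_of_ne hq]
      have hw1 : winAt k x' i = winAt k x i := by
        funext t; exact hwho _ (by omega)
      have hw2 : winAt k (g x') i = winAt k (g x) i := by
        funext t
        show g x' (i + 1 + (t : ℕ)) = g x (i + 1 + (t : ℕ))
        rw [hg1, hg1]
        have hww : winAt k x' (i + 1 + (t : ℕ)) = winAt k x (i + 1 + (t : ℕ)) := by
          funext r; exact hwho _ (by omega)
        rw [hww, hwho _ (by omega)]
      have hxa : x' i = a' := by simp [hx']
      have key : P (j + 1) (winAt k x i) (x' i)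
          = P j (winAt k (g x) i) (P 1 (winAt k x i) (x' i)) := by
        have h1 : P (j + 1) (winAt k x i) (x' i) = g^[j + 1] x' i := by
          rw [← hw1]; exact (hP (j + 1) x' i).symm
        have h2 : g^[j + 1] x' i = g^[j] (g x') i := by
          rw [Function.iterate_succ_apply]
        have h3 : g^[j] (g x') i = P j (winAt k (g x') i) (g x' i) := hP j (g x') i
        have h4 : g x' i = P 1 (winAt k x' i) (x' i) := hg1 x' i
        rw [h1, h2, h3, h4, hw1, hw2]
      show P (j + 1) (winAt k x i) ((P 1 (winAt k x i))⁻¹ a) = P j (winAt k (g x) i) a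
      rw [← ha', ← hxa, key, hxa, ha', ← Equiv.Perm.mul_apply (P 1 (winAt k x i)), mul_inv_cancel, Equiv.Perm.one_apply]
  | cons y u ih =>
      intro x i j
      set x1 : ℕ → Fin n := fun t => x (t - 1) with hx1
      have hsx : shiftMap n x1 = x := by
        funext t; simp [shiftMap, hx1]
      have e2 : winAt k x i = winAt k x1 (i + 1) := by
        funext t
        simp only [winAt, hx1]
        congr 1; omega
      have e2' : winAt k (g x) i = winAt k (g x1) (i + 1) := by
        have hgx : g x = shiftMap n (g x1) := by
          rw [← hsx]; exact congrFun hg x1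
        funext t
        rw [hgx]
        show g x1 (i + 1 + (t : ℕ) + 1) = g x1 (i + 1 + 1 + (t : ℕ))
        congr 1; omega
      rw [e2, e2']
      rw [Amap_cons]
      have hl : (Fgerm k P (winAt k x1 (i + 1)) [] 1)⁻¹ y
          = (P 1 (winAt k x1 (i + 1)))⁻¹ y := by
        simp only [Fgerm, List.reverse_nil, wext_nil]
      rw [hl, Fgerm_prep]
      set x0 := (P 1 (winAt k x1 (i + 1)))⁻¹ y with hx0
      set x2 := Function.update x1 (i + 1) x0 with hx2
      have e4 : wext k [x0] (winAt k x1 (i + 1)) = winAt k x2 i := by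
        funext t
        simp only [wext, List.length_singleton, winAt]
        by_cases h : (t : ℕ) < 1
        · rw [dif_pos h]
          simp only [List.getElem_singleton]
          rw [show i + 1 + (t : ℕ) = i + 1 by omega]
          simp [hx2]
        · rw [dif_neg h, hx2,
            Function.update_of_ne (show i + 1 + (t : ℕ) ≠ i + 1 by omega)]
          show x1 (i + 1 + 1 + ((t : ℕ) - 1)) = x1 (i + 1 + (t : ℕ))
          congr 1; omega
      rw [e4, ih x2 i j]
      have e5 : winAt k (g x2) i = wext k [y] (winAt k (g x1) (i + 1)) := by
        funext t
        simp only [wext, List.length_singleton, winAt]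
        by_cases h : (t : ℕ) < 1
        · rw [dif_pos h]
          simp only [List.getElem_singleton]
          rw [show i + 1 + (t : ℕ) = i + 1 by omega, hg1]
          have hw : winAt k x2 (i + 1) = winAt k x1 (i + 1) := by
            funext r
            show x2 (i + 1 + 1 + (r : ℕ)) = x1 (i + 1 + 1 + (r : ℕ))
            rw [hx2, Function.update_of_ne (show i + 1 + 1 + (r : ℕ) ≠ i + 1 by omega)]
          rw [hw, show x2 (i + 1) = x0 by simp [hx2], hx0, ← Equiv.Perm.mul_apply, mul_inv_cancel, Equiv.Perm.one_apply]
        · rw [dif_neg h]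
          show g x2 (i + 1 + (t : ℕ)) = g x1 (i + 1 + 1 + ((t : ℕ) - 1))
          rw [show i + 1 + 1 + ((t : ℕ) - 1) = i + 1 + (t : ℕ) by omega]
          rw [hg1, hg1]
          have hww : winAt k x2 (i + 1 + (t : ℕ)) = winAt k x1 (i + 1 + (t : ℕ)) := by
            funext r
            show x2 (i + 1 + (t : ℕ) + 1 + (r : ℕ)) = x1 (i + 1 + (t : ℕ) + 1 + (r : ℕ))
            rw [hx2, Function.update_of_ne (by omega)]
          rw [hww, show x2 (i + 1 + (t : ℕ)) = x1 (i + 1 + (t : ℕ)) by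
            rw [hx2, Function.update_of_ne (by omega)]]
      show P j (wext k u.reverse (winAt k (g x2) i))
          = P j (wext k ((y :: u).reverse) (winAt k (g x1) (i + 1)))
      rw [List.reverse_cons, wext_append, ← e5]

lemma Amap_Fgerm_win (g : (ℕ → Fin n) → (ℕ → Fin n))
    (hg : g ∘ shiftMap n = shiftMap n ∘ g)
    (k : ℕ) (P : ℕ → (Fin k → Fin n) → Equiv.Perm (Fin n))
    (hP : ∀ j x i, g^[j] x i = P j (winAt k x i) (x i))
    (x : ℕ → Fin n) (i : ℕ) :
    Amap (Fgerm k P (winAt k x i)) = Fgerm k P (winAt k (g x) i) := by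
  funext u j
  exact Amap_Fgerm g hg k P hP u x i j

lemma Amap_iter_win (g : (ℕ → Fin n) → (ℕ → Fin n))
    (hg : g ∘ shiftMap n = shiftMap n ∘ g)
    (k : ℕ) (P : ℕ → (Fin k → Fin n) → Equiv.Perm (Fin n))
    (hP : ∀ j x i, g^[j] x i = P j (winAt k x i) (x i))
    (m : ℕ) (x : ℕ → Fin n) (i : ℕ) :
    Amap^[m] (Fgerm k P (winAt k x i)) = Fgerm k P (winAt k (g^[m] x) i) := by
  induction m generalizing x with
  | zero => rfl
  | succ m ih =>
      rw [Function.iterate_succ_apply, Function.iterate_succ_apply,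
        Amap_Fgerm_win g hg k P hP x i, ih (g x)]

end UMS
namespace UMS
variable {n : ℕ}

/-- Extend a letter and a window to a full sequence. -/
def exw (k : ℕ) (d a : Fin n) (w : Fin k → Fin n) : ℕ → Fin n :=
  fun t => if t = 0 then a else if h : t - 1 < k then w ⟨t - 1, h⟩ else d

end UMS

open UMS in
theorem unique_minimal_support' (n : ℕ) (hn : 2 ≤ n)
    (φ : (ℕ → Fin n) ≃ₜ (ℕ → Fin n)) (hφ : IsShiftAut n φ)
    (hfin : FiniteOrderAut n φ) :
    ∃ (Q₀ : Type) (_ : Fintype Q₀) (_ : Nonempty Q₀) (π₀ : Fin n → Q₀ → Q₀)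
      (Φ₀ : DigraphAut n π₀),
      IsSupport n π₀ Φ₀ φ ∧
      ∀ (Q : Type) [Fintype Q] [Nonempty Q] (π : Fin n → Q → Q)
          (Φ : DigraphAut n π), IsSupport n π Φ φ →
        ∃ θ : Q → Q₀, Function.Surjective θ ∧
          ∀ (x : Fin n) (q : Q), θ (π x q) = π₀ x (θ q) := by
  obtain ⟨m, hm, hmid⟩ := hfin
  have hd' : 0 < n := by omega
  set d : Fin n := ⟨0, hd'⟩ with hdd
  -- Step 1: uniform block property for each power.
  have block : ∀ j : ℕ, ∃ K : ℕ, ∀ x y : ℕ → Fin n,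
      (∀ t < K, x t = y t) → (⇑φ)^[j] x 0 = (⇑φ)^[j] y 0 := by
    intro j
    by_contra hcon
    push_neg at hcon
    set V : ℕ → Set ((ℕ → Fin n) × (ℕ → Fin n)) :=
      fun K => {p | (∀ t < K, p.1 t = p.2 t) ∧ (⇑φ)^[j] p.1 0 ≠ (⇑φ)^[j] p.2 0} with hV
    have hcl : ∀ K, IsClosed (V K) := by
      intro K
      have h1 : IsClosed {p : (ℕ → Fin n) × (ℕ → Fin n) | ∀ t < K, p.1 t = p.2 t} := by
        have he : {p : (ℕ → Fin n) × (ℕ → Fin n) | ∀ t < K, p.1 t = p.2 t}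
            = ⋂ (t : ℕ) (_ : t < K), {p | p.1 t = p.2 t} := by
          ext p; simp
        rw [he]
        refine isClosed_iInter fun t => isClosed_iInter fun _ => ?_
        exact isClosed_eq ((continuous_apply t).comp continuous_fst)
          ((continuous_apply t).comp continuous_snd)
      have hcont : Continuous fun p : (ℕ → Fin n) × (ℕ → Fin n) =>
          (((⇑φ)^[j] p.1 0), ((⇑φ)^[j] p.2 0)) := by
        refine Continuous.prodMk ?_ ?_
        · exact (continuous_apply 0).comp ((φ.continuous.iterate j).comp continuous_fst)
        · exact (continuous_apply 0).comp ((φ.continuous.iterate j).comp continuous_snd)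
      have h2 : IsClosed {p : (ℕ → Fin n) × (ℕ → Fin n) |
          (⇑φ)^[j] p.1 0 ≠ (⇑φ)^[j] p.2 0} :=
        (isClosed_discrete {q : Fin n × Fin n | q.1 ≠ q.2}).preimage hcont
      exact h1.inter h2
    have hne : ∀ K, (V K).Nonempty := by
      intro K; obtain ⟨x, y, hxy, hnexy⟩ := hcon K; exact ⟨(x, y), hxy, hnexy⟩
    have hsub : ∀ K, V (K + 1) ⊆ V K := by
      intro K p hp; exact ⟨fun t ht => hp.1 t (by omega), hp.2⟩
    obtain ⟨p, hp⟩ := IsCompact.nonempty_iInter_of_sequence_nonempty_isCompact_isClosed V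
      hsub hne (hcl 0).isCompact hcl
    have hmem : ∀ K, p ∈ V K := by simpa [Set.mem_iInter] using hp
    have hp12 : p.1 = p.2 := funext fun t => (hmem (t + 1)).1 t (by omega)
    exact (hmem 0).2 (by rw [hp12])
  choose KK hKK using block
  set k : ℕ := (Finset.range m).sup KK with hk
  have hper : ∀ j : ℕ, (⇑φ)^[j] = (⇑φ)^[j % m] := by
    intro j
    conv_lhs => rw [← Nat.div_add_mod j m]
    rw [Function.iterate_add, Function.iterate_mul, hmid, Function.iterate_id,
      Function.id_comp]
  have blockk : ∀ (j : ℕ) (x y : ℕ → Fin n), (∀ t ≤ k, x t = y t) →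
      (⇑φ)^[j] x 0 = (⇑φ)^[j] y 0 := by
    intro j x y h
    rw [hper j]
    refine hKK (j % m) x y fun t ht => h t ?_
    have hle : KK (j % m) ≤ k := Finset.le_sup (Finset.mem_range.mpr (Nat.mod_lt j hm))
    omega
  have hc : Function.Commute ⇑φ (shiftMap n) := fun x => congrFun hφ x
  have hciter : ∀ (j i : ℕ) (x : ℕ → Fin n),
      (⇑φ)^[j] ((shiftMap n)^[i] x) = (shiftMap n)^[i] ((⇑φ)^[j] x) :=
    fun j i x => ((hc.iterate_left j).iterate_right i) x
  have hshift : ∀ (i : ℕ) (x : ℕ → Fin n) (t : ℕ), (shiftMap n)^[i] x t = x (t + i) := by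
    intro i
    induction i with
    | zero => intro x t; rfl
    | succ i ih =>
        intro x t
        rw [Function.iterate_succ_apply, ih (shiftMap n x) t]
        rfl
  -- Step 2: the local rules of all powers.
  have hfinj : ∀ (j : ℕ) (w : Fin k → Fin n),
      Function.Injective fun a : Fin n => (⇑φ)^[j] (exw k d a w) 0 := by
    intro j w a b hab
    have hxy : ∀ t : ℕ, t ≠ 0 → exw k d a w t = exw k d b w t := by
      intro t ht; simp [exw, ht]
    have h2 : (⇑φ)^[j] (exw k d a w) = (⇑φ)^[j] (exw k d b w) := by
      funext i
      rcases Nat.eq_zero_or_pos i with hi | hi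
      · rw [hi]; exact hab
      · have hs : (shiftMap n)^[i] (exw k d a w) = (shiftMap n)^[i] (exw k d b w) := by
          funext t; rw [hshift, hshift]; exact hxy _ (by omega)
        calc (⇑φ)^[j] (exw k d a w) i
            = (shiftMap n)^[i] ((⇑φ)^[j] (exw k d a w)) 0 := by
              rw [hshift, Nat.zero_add]
          _ = (⇑φ)^[j] ((shiftMap n)^[i] (exw k d a w)) 0 := by rw [hciter]
          _ = (⇑φ)^[j] ((shiftMap n)^[i] (exw k d b w)) 0 := by rw [hs]
          _ = (shiftMap n)^[i] ((⇑φ)^[j] (exw k d b w)) 0 := by rw [hciter]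
          _ = (⇑φ)^[j] (exw k d b w) i := by rw [hshift, Nat.zero_add]
    have h3 := congrFun ((φ.injective.iterate j) h2) 0
    simpa [exw] using h3
  set P : ℕ → (Fin k → Fin n) → Equiv.Perm (Fin n) :=
    fun j w => Equiv.ofBijective _ (Finite.injective_iff_bijective.mp (hfinj j w)) with hPdef
  have hP : ∀ (j : ℕ) (x : ℕ → Fin n) (i : ℕ),
      (⇑φ)^[j] x i = P j (winAt k x i) (x i) := by
    intro j x i
    have h1 : (⇑φ)^[j] x i = (⇑φ)^[j] ((shiftMap n)^[i] x) 0 := by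
      rw [hciter, hshift, Nat.zero_add]
    rw [h1]
    show _ = (⇑φ)^[j] (exw k d (x i) (winAt k x i)) 0
    apply blockk j
    intro t ht
    rcases Nat.eq_zero_or_pos t with h0 | h0
    · rw [h0, hshift]; simp [exw]
    · rw [hshift]
      have htk : t - 1 < k := by omega
      simp only [exw]
      rw [if_neg (by omega), dif_pos htk]
      show x (t + i) = x (i + 1 + (t - 1))
      congr 1; omega
  -- Step 3: assemble the minimal automaton.
  have hAmem : ∀ f ∈ Set.range (Fgerm k P), Amap f ∈ Set.range (Fgerm k P) := by
    rintro f ⟨v, rfl⟩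
    refine ⟨winAt k (⇑φ (padw k d v)) 0, ?_⟩
    rw [← Amap_Fgerm_win ⇑φ hφ k P hP (padw k d v) 0, winAt_padw]
  set Asub : Q0 n k P → Q0 n k P := fun q => ⟨Amap q.1, hAmem q.1 q.2⟩ with hAsub
  have hval : ∀ (j : ℕ) (q : Q0 n k P), (Asub^[j] q).1 = Amap^[j] q.1 := by
    intro j
    induction j with
    | zero => intro q; rfl
    | succ j ih =>
        intro q
        rw [Function.iterate_succ_apply', Function.iterate_succ_apply']
        show Amap ((Asub^[j] q).1) = _
        rw [ih q]
  have hAm : ∀ q : Q0 n k P, Asub^[m] q = q := by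
    rintro ⟨f, v, hv⟩
    apply Subtype.ext
    refine (hval m _).trans ?_
    show Amap^[m] f = f
    calc Amap^[m] f = Amap^[m] (Fgerm k P (winAt k (padw k d v) 0)) := by
          rw [winAt_padw, hv]
      _ = Fgerm k P (winAt k ((⇑φ)^[m] (padw k d v)) 0) :=
          Amap_iter_win ⇑φ hφ k P hP m (padw k d v) 0
      _ = Fgerm k P (winAt k (padw k d v) 0) := by rw [hmid]; rfl
      _ = f := by rw [winAt_padw, hv]
  have hleft : ∀ q : Q0 n k P, Asub^[m - 1] (Asub q) = q := by
    intro q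
    calc Asub^[m - 1] (Asub q) = Asub^[m - 1 + 1] q :=
          (Function.iterate_succ_apply Asub (m - 1) q).symm
      _ = q := by rw [show m - 1 + 1 = m by omega]; exact hAm q
  have hright : ∀ q : Q0 n k P, Asub (Asub^[m - 1] q) = q := by
    intro q
    calc Asub (Asub^[m - 1] q) = Asub^[m - 1 + 1] q :=
          (Function.iterate_succ_apply' Asub (m - 1) q).symm
      _ = q := by rw [show m - 1 + 1 = m by omega]; exact hAm q
  refine ⟨Q0 n k P, (Set.finite_range (Fgerm k P)).fintype,
    ⟨⟨Fgerm k P (fun _ => d), ⟨_, rfl⟩⟩⟩, pi0 k P,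
    { α := ⟨Asub, Asub^[m - 1], hleft, hright⟩
      lab := fun q => q.1 [] 1
      compat := by
        intro x q
        apply Subtype.ext
        exact (Amap_prep x q.1).symm }, ?_, ?_⟩
  · -- IsSupport
    have tsval : ∀ (w : List (Fin n)) (q : Q0 n k P),
        (transStar (pi0 k P) w q).1 = fun u j => q.1 (w ++ u) j := by
      intro w
      induction w with
      | nil => intro q; rfl
      | cons a w ih =>
          intro q
          show (transStar (pi0 k P) w (pi0 k P a q)).1 = _
          rw [ih (pi0 k P a q)]
          rfl
    refine ⟨k, fun w => ⟨Fgerm k P (wext k w.reverse (fun _ => d)), ⟨_, rfl⟩⟩, ?_, ?_, ?_⟩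
    · intro w hw q
      apply Subtype.ext
      rw [tsval]
      obtain ⟨v, hv⟩ := q.2
      rw [← hv]
      funext u j
      show P j (wext k ((w ++ u).reverse) v)
          = P j (wext k u.reverse (wext k w.reverse (fun _ => d)))
      rw [List.reverse_append, wext_append,
        wext_long k w.reverse (by rw [List.length_reverse, hw]) v (fun _ => d)]
    · intro q
      obtain ⟨v, hv⟩ := q.2
      refine ⟨(List.ofFn v).reverse, by simp, ?_⟩
      apply Subtype.ext
      show Fgerm k P (wext k (List.ofFn v).reverse.reverse (fun _ => d)) = q.1
      rw [List.reverse_reverse, wext_ofFn, hv]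
    · funext x i
      show Fgerm k P (wext k (List.ofFn fun t : Fin k => x (i + k - (t : ℕ))).reverse
        (fun _ => d)) [] 1 (x i) = ⇑φ x i
      have hwin : wext k (List.ofFn fun t : Fin k => x (i + k - (t : ℕ))).reverse
          (fun _ => d) = winAt k x i := by
        funext t
        have ht := t.isLt
        rw [wext, dif_pos (by simpa using ht)]
        rw [List.getElem_reverse, List.getElem_ofFn]
        show x (i + k - _) = x (i + 1 + (t : ℕ))
        congr 1
        simp only [List.length_ofFn]
        omega
      simp only [Fgerm, List.reverse_nil, wext_nil, hwin]
      rw [← hP 1 x i, Function.iterate_one]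
  · -- minimality
    intro Q _ _ π Φ hsup
    obtain ⟨k', s, hsync, hcore, hind⟩ := hsup
    have hind' : ∀ (x : ℕ → Fin n) (i : ℕ), ⇑φ x i = Φ.lab (stQ k' s x i) (x i) := by
      intro x i; rw [← hind]; rfl
    exact folding π Φ k' s hsync hcore ⇑φ hind' k P hP d

theorem unique_minimal_support (n : ℕ) (hn : 2 ≤ n)
    (φ : (ℕ → Fin n) ≃ₜ (ℕ → Fin n)) (hφ : IsShiftAut n φ)
    (hfin : FiniteOrderAut n φ) :
    ∃ (Q₀ : Type) (_ : Fintype Q₀) (_ : Nonempty Q₀) (π₀ : Fin n → Q₀ → Q₀)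
      (Φ₀ : DigraphAut n π₀),
      IsSupport n π₀ Φ₀ φ ∧
      ∀ (Q : Type) [Fintype Q] [Nonempty Q] (π : Fin n → Q → Q)
          (Φ : DigraphAut n π), IsSupport n π Φ φ →
        ∃ θ : Q → Q₀, Function.Surjective θ ∧
          ∀ (x : Fin n) (q : Q), θ (π x q) = π₀ x (θ q) :=
  unique_minimal_support' n hn φ hφ hfin
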